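/- arXiv:math/0609127 — 6 statements merged into one kernel-verified Lean document; each statement's English description precedes it below -/
import Mathlib

section
/- The three rational squares 25/9, 64/9, 196/9 have the property that the product of any two of them increased by the third is the square of a rational number; that is, for any permutation (a, b, c) of (25/9, 64/9, 196/9), a*b + c is the square of a rational number. -/
theorem product_two_plus_third_square :
    ∀ a b c : ℚ, ({a, b, c} : Multiset ℚ) = ({25/9, 64/9, 196/9} : Multiset ℚ) →
      ∃ r : ℚ, a * b + c = r ^ 2 := by
  intro a b c h
  simp only [Multiset.insert_eq_cons, Multiset.cons_eq_cons, Multiset.singleton_eq_cons_iff,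
    Multiset.singleton_inj] at h
  rcases h with ⟨rfl, ⟨rfl, rfl⟩ | ⟨-, cs, ⟨rfl, rfl⟩, hb, -⟩⟩ |
    ⟨-, cs, ⟨rfl, hcs⟩ | ⟨-, cs1, ⟨rfl, rfl⟩, hcs⟩,
      ⟨ha, hcs'⟩ | ⟨-, cs1', ⟨ha, rfl⟩, hcs'⟩⟩
  · exact ⟨58/9, by norm_num⟩
  · subst hb; exact ⟨74/9, by norm_num⟩
  · subst ha
    obtain rfl : c = 196/9 := Multiset.singleton_inj.mp (hcs.trans hcs'.symm)
    exact ⟨58/9, by norm_num⟩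
  · subst ha
    obtain rfl : c = 64/9 := Multiset.singleton_inj.mp (hcs.trans hcs')
    exact ⟨74/9, by norm_num⟩
  · subst ha
    obtain rfl : b = 196/9 := (Multiset.singleton_inj.mp (hcs'.trans hcs)).symm
    exact ⟨113/9, by norm_num⟩
  · subst ha
    obtain rfl : b = 64/9 := Multiset.singleton_inj.mp (hcs.symm.trans hcs')
    exact ⟨113/9, by norm_num⟩
end

section
/- For every rational number t such that 5*t^2 + 4 is the square of a rational number, there exists a rational number f with f^2 ≠ 5 such that t = 4*f/(5 - f^2). -/
lemma sq_ne_five (f : ℚ) : f ^ 2 ≠ 5 := by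
  intro h
  have h5 : Irrational (Real.sqrt 5) := by
    simpa using (Nat.Prime.irrational_sqrt (by norm_num : Nat.Prime 5))
  have hf : ((f : ℝ)) ^ 2 = 5 := by exact_mod_cast congrArg (fun x : ℚ => (x : ℝ)) h
  have : Real.sqrt 5 = |(f : ℝ)| := by
    rw [← hf, Real.sqrt_sq_eq_abs]
  rw [this] at h5
  exact h5 ⟨|f|, by push_cast; simp⟩

theorem param_surjective (t : ℚ) (h : ∃ r : ℚ, 5 * t ^ 2 + 4 = r ^ 2) :
    ∃ f : ℚ, f ^ 2 ≠ 5 ∧ t = 4 * f / (5 - f ^ 2) := by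
  obtain ⟨r, hr⟩ := h
  by_cases ht : t = 0
  · exact ⟨0, sq_ne_five 0, by simp [ht]⟩
  · refine ⟨(r - 2) / t, sq_ne_five _, ?_⟩
    have h5 : (5 : ℚ) - ((r - 2) / t) ^ 2 ≠ 0 := by
      intro h0
      exact sq_ne_five ((r - 2) / t) (by linarith)
    rw [eq_div_iff h5]
    field_simp
    ring_nf
    ring_nf at hr
    nlinarith [hr, sq_nonneg t]
end

section
/- There exist infinitely many rational numbers z such that {4, (8/19)^2, z^2} is an Eulerian triple of squares; that is, the set of rationals z for which 4*z^2 + 4 + z^2 and (8/19)^2*z^2 + (8/19)^2 + z^2 are both squares of rational numbers is infinite. -/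
/-!
Put `z = 16xy / (80x² - y²)`. Then `5z² + 4 = (2(80x² + y²) / (80x² - y²))²` identically, and
`425z² + 64` is a square whenever `(x, y)` lies on `E : y² = x(x - 345)(x - 425)`, the curve
parametrizing the second condition. It remains to find infinitely many points of `E(ℚ)` with
distinct `z`. On `y² = x³ + a₂x² + a₄x + a₆` with 2-integral coefficients, a point with `|x|₂ > 1`
has `|y|₂² = |x|₂³`, and doubling it multiplies `|x|₂` by `4`. The doubles of a point with
`|x|₂ = 4` therefore have `|x|₂ = 4ⁿ⁺¹`, hence `|z|₂² = 1 / (256 · 4ⁿ⁺¹)`, all distinct.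
-/

open IsAbsoluteValue

namespace padicNorm

variable {p : ℕ} [Fact p.Prime]

lemma add_eq_left_of_lt {q r : ℚ} (h : padicNorm p r < padicNorm p q) :
    padicNorm p (q + r) = padicNorm p q := by
  rw [add_eq_max_of_ne h.ne', max_eq_left h.le]

lemma add_le_of_le {q r c : ℚ} (hq : padicNorm p q ≤ c) (hr : padicNorm p r ≤ c) :
    padicNorm p (q + r) ≤ c :=
  padicNorm.nonarchimedean.trans (max_le hq hr)

end padicNorm

lemma padicNorm_two_two : padicNorm 2 (2 : ℚ) = 1 / 2 := by
  simpa using padicNorm.padicNorm_p_of_prime (p := 2)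

lemma padicNorm_two_natCast_of_odd {n : ℕ} (hn : Odd n) : padicNorm 2 (n : ℚ) = 1 :=
  (padicNorm.nat_eq_one_iff n).2 (Nat.two_dvd_ne_zero.2 (Nat.odd_iff.1 hn))

namespace WeierstrassCurve.Affine

structure IsTwoIntegralShort (W : Affine ℚ) : Prop where
  a₁_eq : W.a₁ = 0
  a₃_eq : W.a₃ = 0
  a₂_le : padicNorm 2 W.a₂ ≤ 1
  a₄_le : padicNorm 2 W.a₄ ≤ 1
  a₆_le : padicNorm 2 W.a₆ ≤ 1

def double (W : Affine ℚ) (P : ℚ × ℚ) : ℚ × ℚ :=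
  (W.addX P.1 P.1 (W.slope P.1 P.1 P.2 P.2), W.addY P.1 P.1 P.2 (W.slope P.1 P.1 P.2 P.2))

variable {W : Affine ℚ}

lemma equation_double {P : ℚ × ℚ} (hP : W.Equation P.1 P.2) (hy : P.2 ≠ W.negY P.1 P.2) :
    W.Equation (W.double P).1 (W.double P).2 :=
  equation_add hP hP fun h => hy h.2

namespace IsTwoIntegralShort

lemma padicNorm_sq_Y {x y : ℚ} (hW : W.IsTwoIntegralShort) (h : W.Equation x y)
    (hx : 1 < padicNorm 2 x) : padicNorm 2 y ^ 2 = padicNorm 2 x ^ 3 := by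
  rw [equation_iff, hW.a₁_eq, hW.a₃_eq] at h
  have hlow : padicNorm 2 (W.a₂ * x ^ 2 + W.a₄ * x + W.a₆) < padicNorm 2 (x ^ 3) := by
    rw [abv_pow (padicNorm 2)]
    refine lt_of_le_of_lt ?_ (pow_lt_pow_right₀ hx (by norm_num : 2 < 3))
    refine padicNorm.add_le_of_le (padicNorm.add_le_of_le ?_ ?_) ?_
    · rw [padicNorm.mul, abv_pow (padicNorm 2)]
      nlinarith [hW.a₂_le, padicNorm.nonneg (p := 2) W.a₂]
    · rw [padicNorm.mul]
      nlinarith [hW.a₄_le, padicNorm.nonneg (p := 2) W.a₄]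
    · nlinarith [hW.a₆_le]
  calc padicNorm 2 y ^ 2 = padicNorm 2 (x ^ 3 + (W.a₂ * x ^ 2 + W.a₄ * x + W.a₆)) := by
        rw [← abv_pow (padicNorm 2)]
        congr 1
        linear_combination h
    _ = padicNorm 2 (x ^ 3) := padicNorm.add_eq_left_of_lt hlow
    _ = padicNorm 2 x ^ 3 := abv_pow (padicNorm 2) x 3

lemma Y_ne_negY {x y : ℚ} (hW : W.IsTwoIntegralShort) (h : W.Equation x y)
    (hx : 1 < padicNorm 2 x) : y ≠ W.negY x y := by
  have hy := hW.padicNorm_sq_Y h hx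
  rw [negY, hW.a₁_eq, hW.a₃_eq]
  rintro hy0
  obtain rfl : y = 0 := by linarith
  simp only [padicNorm.zero] at hy
  nlinarith [pow_pos (one_pos.trans hx) 3]

lemma padicNorm_double_fst {P : ℚ × ℚ} (hW : W.IsTwoIntegralShort) (hP : W.Equation P.1 P.2)
    (hx : 1 < padicNorm 2 P.1) :
    padicNorm 2 (W.double P).1 = 4 * padicNorm 2 P.1 := by
  obtain ⟨x, y⟩ := P
  have hy := hW.padicNorm_sq_Y hP hx
  set ℓ := W.slope x x y y with hℓ_def
  have hslope : ℓ = (3 * x ^ 2 + (2 * W.a₂ * x + W.a₄)) / (2 * y) := by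
    rw [hℓ_def, slope_of_Y_ne rfl (hW.Y_ne_negY hP hx), negY, hW.a₁_eq, hW.a₃_eq]
    ring
  have hlin : padicNorm 2 (2 * W.a₂ * x + W.a₄) ≤ padicNorm 2 x := by
    refine padicNorm.add_le_of_le ?_ (by linarith [hW.a₄_le])
    rw [padicNorm.mul, padicNorm.mul, padicNorm_two_two]
    nlinarith [hW.a₂_le, padicNorm.nonneg (p := 2) W.a₂]
  have hnum : padicNorm 2 (3 * x ^ 2 + (2 * W.a₂ * x + W.a₄)) = padicNorm 2 x ^ 2 := by
    have h3 : padicNorm 2 (3 : ℚ) = 1 := by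
      exact_mod_cast padicNorm_two_natCast_of_odd (n := 3) (by decide)
    rw [padicNorm.add_eq_left_of_lt] <;> rw [padicNorm.mul, h3, one_mul, abv_pow (padicNorm 2)]
    exact hlin.trans_lt (lt_self_pow₀ hx one_lt_two)
  have hℓ : padicNorm 2 ℓ ^ 2 = 4 * padicNorm 2 x := by
    rw [hslope, padicNorm.div, padicNorm.mul, padicNorm_two_two, hnum, div_pow, mul_pow, hy]
    field_simp
    ring
  have hrest : padicNorm 2 (-(W.a₂ + 2 * x)) < padicNorm 2 (ℓ ^ 2) := by
    rw [padicNorm.neg, abv_pow (padicNorm 2), hℓ]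
    refine lt_of_le_of_lt (padicNorm.add_le_of_le (c := padicNorm 2 x) ?_ ?_) (by linarith)
    · linarith [hW.a₂_le]
    · rw [padicNorm.mul, padicNorm_two_two]
      linarith
  calc padicNorm 2 (W.double (x, y)).1 = padicNorm 2 (ℓ ^ 2 + -(W.a₂ + 2 * x)) := by
        congr 1
        simp only [double, addX, hW.a₁_eq, ← hℓ_def]
        ring
    _ = padicNorm 2 (ℓ ^ 2) := padicNorm.add_eq_left_of_lt hrest
    _ = 4 * padicNorm 2 x := by rw [abv_pow (padicNorm 2), hℓ]

lemma iterate_double {P : ℚ × ℚ} (hW : W.IsTwoIntegralShort) (hP : W.Equation P.1 P.2)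
    (hx : 1 < padicNorm 2 P.1) (n : ℕ) :
    W.Equation (W.double^[n] P).1 (W.double^[n] P).2 ∧
      padicNorm 2 (W.double^[n] P).1 = 4 ^ n * padicNorm 2 P.1 := by
  induction n with
  | zero => simpa using hP
  | succ n ih =>
    obtain ⟨hPn, hxn⟩ := ih
    have hxn' : 1 < padicNorm 2 (W.double^[n] P).1 := by
      rw [hxn]
      exact one_lt_mul_of_le_of_lt (one_le_pow₀ (by norm_num)) hx
    rw [Function.iterate_succ_apply']
    refine ⟨equation_double hPn (hW.Y_ne_negY hPn hxn'), ?_⟩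
    rw [hW.padicNorm_double_fst hPn hxn', hxn, pow_succ]
    ring

end IsTwoIntegralShort

end WeierstrassCurve.Affine

open WeierstrassCurve.Affine

def IsEulerPair (a b : ℚ) : Prop := ∃ r : ℚ, a * b + a + b = r ^ 2

def eulerZ (x y : ℚ) : ℚ := 16 * x * y / (80 * x ^ 2 - y ^ 2)

lemma isEulerPair_four_eulerZ_sq {x y : ℚ} (h : 80 * x ^ 2 - y ^ 2 ≠ 0) :
    IsEulerPair 4 (eulerZ x y ^ 2) := by
  refine ⟨2 * (80 * x ^ 2 + y ^ 2) / (80 * x ^ 2 - y ^ 2), ?_⟩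
  unfold eulerZ
  -- otherwise `field_simp` normalizes the denominator into a form `h` no longer matches
  generalize hD : 80 * x ^ 2 - y ^ 2 = D at h
  field_simp
  subst hD
  ring

lemma padicNorm_eighty_mul_sq_sub_sq {x y : ℚ}
    (hxy : padicNorm 2 y ^ 2 = padicNorm 2 x ^ 3) (hx : 1 < padicNorm 2 x) :
    padicNorm 2 (80 * x ^ 2 - y ^ 2) = padicNorm 2 x ^ 3 := by
  have h5 : padicNorm 2 (5 : ℚ) = 1 := by
    exact_mod_cast padicNorm_two_natCast_of_odd (n := 5) (by decide)
  have h80 : padicNorm 2 (80 : ℚ) = 1 / 16 := by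
    rw [show (80 : ℚ) = 5 * 2 ^ 4 by norm_num, padicNorm.mul, abv_pow (padicNorm 2), h5,
      padicNorm_two_two]
    norm_num
  have hsmall : padicNorm 2 (80 * x ^ 2) < padicNorm 2 (-y ^ 2) := by
    rw [padicNorm.neg, padicNorm.mul, h80, abv_pow (padicNorm 2), abv_pow (padicNorm 2), hxy]
    nlinarith [pow_lt_pow_right₀ hx (show 2 < 3 by norm_num), pow_pos (one_pos.trans hx) 2]
  rw [sub_eq_neg_add, padicNorm.add_eq_left_of_lt hsmall, padicNorm.neg, abv_pow (padicNorm 2),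
    hxy]

lemma padicNorm_eulerZ_sq {x y : ℚ}
    (hxy : padicNorm 2 y ^ 2 = padicNorm 2 x ^ 3) (hx : 1 < padicNorm 2 x) :
    padicNorm 2 (eulerZ x y) ^ 2 = 1 / (256 * padicNorm 2 x) := by
  have h16 : padicNorm 2 (16 : ℚ) = 1 / 16 := by
    rw [show (16 : ℚ) = 2 ^ 4 by norm_num, abv_pow (padicNorm 2), padicNorm_two_two]
    norm_num
  rw [eulerZ, padicNorm.div, padicNorm.mul, padicNorm.mul, h16,
    padicNorm_eighty_mul_sq_sub_sq hxy hx, div_pow, mul_pow, mul_pow, hxy]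
  field_simp
  ring

def eulerCurve : WeierstrassCurve.Affine ℚ := ⟨0, -770, 0, 146625, 0⟩

lemma isEulerPair_eulerZ_sq_of_equation {x y : ℚ} (hE : eulerCurve.Equation x y)
    (h : 80 * x ^ 2 - y ^ 2 ≠ 0) : IsEulerPair ((8 / 19) ^ 2) (eulerZ x y ^ 2) := by
  rw [equation_iff] at hE
  simp only [eulerCurve] at hE
  refine ⟨8 * x * (146625 - x ^ 2) / (19 * (80 * x ^ 2 - y ^ 2)), ?_⟩
  unfold eulerZ
  generalize hD : 80 * x ^ 2 - y ^ 2 = D at h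
  field_simp
  subst hD
  linear_combination (64 * (y ^ 2 + x ^ 3 - 770 * x ^ 2 + 146625 * x) + 98560 * x ^ 2) * hE

lemma eulerCurve_isTwoIntegralShort : eulerCurve.IsTwoIntegralShort where
  a₁_eq := rfl
  a₃_eq := rfl
  a₂_le := by simpa [eulerCurve] using padicNorm.of_int (p := 2) (-770)
  a₄_le := by simpa [eulerCurve] using padicNorm.of_int (p := 2) 146625
  a₆_le := by simp [eulerCurve]

-- `2 • (245, 2100) + (425, 0)`, which has `|x|₂ > 1` unlike `(245, 2100)` itself.
def eulerBasePoint : ℚ × ℚ := (938825 / 4, -908163375 / 8)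

lemma equation_eulerBasePoint : eulerCurve.Equation eulerBasePoint.1 eulerBasePoint.2 := by
  rw [equation_iff]
  norm_num [eulerCurve, eulerBasePoint]

lemma padicNorm_eulerBasePoint_fst : padicNorm 2 eulerBasePoint.1 = 4 := by
  have h := padicNorm_two_natCast_of_odd (n := 938825) (by decide)
  push_cast at h
  rw [eulerBasePoint, padicNorm.div, h, show (4 : ℚ) = 2 ^ 2 by norm_num,
    abv_pow (padicNorm 2), padicNorm_two_two]
  norm_num

lemma eulerCurve_isEulerPair {x y : ℚ} (hE : eulerCurve.Equation x y) (hx : 1 < padicNorm 2 x) :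
    IsEulerPair 4 (eulerZ x y ^ 2) ∧ IsEulerPair ((8 / 19) ^ 2) (eulerZ x y ^ 2) := by
  have hD : 80 * x ^ 2 - y ^ 2 ≠ 0 := by
    intro h
    have := padicNorm_eighty_mul_sq_sub_sq (eulerCurve_isTwoIntegralShort.padicNorm_sq_Y hE hx) hx
    rw [h, padicNorm.zero] at this
    nlinarith [pow_pos (one_pos.trans hx) 3]
  exact ⟨isEulerPair_four_eulerZ_sq hD, isEulerPair_eulerZ_sq_of_equation hE hD⟩

def eulerPoint (n : ℕ) : ℚ × ℚ := eulerCurve.double^[n] eulerBasePoint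

lemma eulerPoint_spec (n : ℕ) : eulerCurve.Equation (eulerPoint n).1 (eulerPoint n).2 ∧
    padicNorm 2 (eulerPoint n).1 = 4 ^ (n + 1) := by
  have h := eulerCurve_isTwoIntegralShort.iterate_double equation_eulerBasePoint
    (by rw [padicNorm_eulerBasePoint_fst]; norm_num) n
  rwa [padicNorm_eulerBasePoint_fst, ← pow_succ] at h

lemma one_lt_padicNorm_eulerPoint_fst (n : ℕ) : 1 < padicNorm 2 (eulerPoint n).1 := by
  rw [(eulerPoint_spec n).2]
  exact one_lt_pow₀ (by norm_num) n.succ_ne_zero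

lemma padicNorm_eulerZ_eulerPoint_sq (n : ℕ) :
    padicNorm 2 (eulerZ (eulerPoint n).1 (eulerPoint n).2) ^ 2 = 1 / (256 * 4 ^ (n + 1)) := by
  have hx := one_lt_padicNorm_eulerPoint_fst n
  have hy := eulerCurve_isTwoIntegralShort.padicNorm_sq_Y (eulerPoint_spec n).1 hx
  rw [padicNorm_eulerZ_sq hy hx, (eulerPoint_spec n).2]

theorem infinitely_many_z :
    {z : ℚ | (∃ r : ℚ, 4 * z ^ 2 + 4 + z ^ 2 = r ^ 2) ∧
      (∃ s : ℚ, (8/19) ^ 2 * z ^ 2 + (8/19) ^ 2 + z ^ 2 = s ^ 2)}.Infinite := by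
  refine Set.infinite_of_injective_forall_mem
    (f := fun n => eulerZ (eulerPoint n).1 (eulerPoint n).2) (fun m n hmn => ?_)
    fun n => eulerCurve_isEulerPair (eulerPoint_spec n).1 (one_lt_padicNorm_eulerPoint_fst n)
  dsimp only at hmn
  have h := padicNorm_eulerZ_eulerPoint_sq m
  rw [hmn, padicNorm_eulerZ_eulerPoint_sq n] at h
  have h4 : (4 : ℚ) ^ (m + 1) = 4 ^ (n + 1) := by
    field_simp at h
    linarith
  exact Nat.succ_injective (pow_right_injective₀ (by norm_num) (by norm_num) h4)
end

section
/- For all rational numbers x and m with x^2 + 1 - m^2 ≠ 0, setting t = 2*x*m/(x^2 + 1 - m^2), one has (x^2 + 1)*t^2 + x^2 = (x*(x^2 + m^2 + 1)/(x^2 + 1 - m^2))^2; in particular x^2*t^2 + x^2 + t^2 is the square of a rational number. -/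
theorem general_parameterisation (x m : ℚ) (h : x ^ 2 + 1 - m ^ 2 ≠ 0) :
    (x ^ 2 + 1) * (2 * x * m / (x ^ 2 + 1 - m ^ 2)) ^ 2 + x ^ 2 =
      (x * (x ^ 2 + m ^ 2 + 1) / (x ^ 2 + 1 - m ^ 2)) ^ 2 ∧
    ∃ r : ℚ, x ^ 2 * (2 * x * m / (x ^ 2 + 1 - m ^ 2)) ^ 2 + x ^ 2 +
      (2 * x * m / (x ^ 2 + 1 - m ^ 2)) ^ 2 = r ^ 2 := by
  have key : (x ^ 2 + 1) * (2 * x * m / (x ^ 2 + 1 - m ^ 2)) ^ 2 + x ^ 2 =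
      (x * (x ^ 2 + m ^ 2 + 1) / (x ^ 2 + 1 - m ^ 2)) ^ 2 := by
    field_simp
    ring
  refine ⟨key, x * (x ^ 2 + m ^ 2 + 1) / (x ^ 2 + 1 - m ^ 2), ?_⟩
  rw [← key]; ring
end

section
/- Let x, y, r be rational numbers with x^2 + 1 - r^2 ≠ 0, and set w = 2*r*x/(x^2 + 1 - r^2). Then y^2*w^2 + y^2 + w^2 is the square of a rational number if and only if y^2*r^4 + (2*x^2*(y^2 + 2) - 2*y^2)*r^2 + x^4*y^2 + 2*x^2*y^2 + y^2 is the square of a rational number. -/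
theorem quartic_condition_for_w (x y r : ℚ) (hr : x ^ 2 + 1 - r ^ 2 ≠ 0)
    (w : ℚ) (hw : w = 2 * r * x / (x ^ 2 + 1 - r ^ 2)) :
    (∃ c : ℚ, y ^ 2 * w ^ 2 + y ^ 2 + w ^ 2 = c ^ 2) ↔
    (∃ d : ℚ, y ^ 2 * r ^ 4 + (2 * x ^ 2 * (y ^ 2 + 2) - 2 * y ^ 2) * r ^ 2 +
      x ^ 4 * y ^ 2 + 2 * x ^ 2 * y ^ 2 + y ^ 2 = d ^ 2) := by
  subst hw
  constructor
  · rintro ⟨c, hc⟩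
    refine ⟨c * (x ^ 2 + 1 - r ^ 2), ?_⟩
    field_simp at hc
    linear_combination hc
  · rintro ⟨d, hd⟩
    refine ⟨d / (x ^ 2 + 1 - r ^ 2), ?_⟩
    field_simp
    linear_combination hd
end

section
/- The four rational squares 18^2, (3/5)^2, (8/5)^2, (224/107)^2 form an Eulerian quadruple of squares: for any two distinct elements a, b of {324, 9/25, 64/25, 50176/11449}, the quantity a*b + a + b is the square of a rational number. -/
theorem eulerian_quadruple_of_squares :
    (∀ a b : ℚ, a ∈ ({324, 9/25, 64/25, 50176/11449} : Set ℚ) →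
      b ∈ ({324, 9/25, 64/25, 50176/11449} : Set ℚ) →
      a ≠ b → ∃ r : ℚ, a * b + a + b = r ^ 2) ∧
    (324 : ℚ) = 18 ^ 2 ∧ (9/25 : ℚ) = (3/5) ^ 2 ∧ (64/25 : ℚ) = (8/5) ^ 2 ∧
    (50176/11449 : ℚ) = (224/107) ^ 2 := by
  refine ⟨?_, by norm_num, by norm_num, by norm_num, by norm_num⟩
  intro a b ha hb hab
  simp only [Set.mem_insert_iff, Set.mem_singleton_iff] at ha hb
  rcases ha with rfl | rfl | rfl | rfl <;> rcases hb with rfl | rfl | rfl | rfl <;>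
    first
    | exact absurd rfl hab
    | (refine ⟨21, ?_⟩; norm_num; done)
    | (refine ⟨34, ?_⟩; norm_num; done)
    | (refine ⟨4474/107, ?_⟩; norm_num; done)
    | (refine ⟨49/25, ?_⟩; norm_num; done)
    | (refine ⟨269/107, ?_⟩; norm_num; done)
    | (refine ⟨456/107, ?_⟩; norm_num; done)
end
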